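/- arXiv:0706.1701 — 2 statements merged into one kernel-verified Lean document; each statement's English description precedes it below -/
import Mathlib

section
/- Let R_k ⊆ V^k be the relation of walks of length k−1 in a d-regular graph G on vertex set V (k ≥ 3), and suppose R_{k-1} is an ε(k−2)-expander and R₂ is an ε-expander relation. Then for any functions x₁,…,x_k : V → [0,1], |R_k(x₁,…,x_k) − |R_k|·∏_{i=1}^k |xᵢ|₁/|V|^k| < (k−1)·ε·|R_k|. -/
/-!
Peeling off the first vertex of a walk gives `R_k(x₁, …, x_k) = R_{k-1}(g, x₃, …, x_k)`, where
`g v = x₂ v · ∑_{a ∼ v} x₁ a` takes values in `[0, d]` and `∑ g = R₂(x₁, x₂)`. The expander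
property of `R_{k-1}` applied to `(g, x₃, …, x_k)` costs `ε (k - 2) |R_{k-1}| d = ε (k - 2) |R_k|`.
The remaining difference of mean terms is `C · (R₂(x₁, x₂) - |R₂| |x₁|₁ |x₂|₁ / |V|²)` with
`0 ≤ C ≤ d^{k-2}`, so the expander property of `R₂` bounds it by `ε |R_k|`.
-/

open Finset

attribute [local instance] Classical.propDecidable

/-- `R(S₁,…,S_r)`: the number of tuples of `R` whose `i`-th coordinate lies in `T i`. -/
noncomputable def relCount {S : Type*} {r : ℕ} (R : Finset (Fin r → S))
    (T : Fin r → Finset S) : ℝ :=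
  ((R.filter fun t => ∀ i, t i ∈ T i).card : ℝ)

/-- `R(f₁,…,f_r) = Σ_{(x₁,…,x_r)∈R} ∏ᵢ fᵢ(xᵢ)`. -/
noncomputable def relApply {S : Type*} {r : ℕ} (R : Finset (Fin r → S))
    (f : Fin r → S → ℝ) : ℝ :=
  ∑ t ∈ R, ∏ i, f i (t i)

/-- `R` is an ε-expander relation. -/
def IsExpanderRel {S : Type*} [Fintype S] {r : ℕ} (ε : ℝ) (R : Finset (Fin r → S)) : Prop :=
  ∀ T : Fin r → Finset S,
    |relCount R T - (R.card : ℝ) * (∏ i, ((T i).card : ℝ)) / (Fintype.card S : ℝ) ^ r|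
      < ε * R.card


/-- `R_k`: the `k`-ary relation of walks of length `k-1` in `G`. -/
noncomputable def walkRel {V : Type*} [Fintype V] (G : SimpleGraph V) (k : ℕ) :
    Finset (Fin k → V) :=
  Finset.univ.filter fun t =>
    ∀ i : Fin k, ∀ h : (i : ℕ) + 1 < k, G.Adj (t i) (t ⟨(i : ℕ) + 1, h⟩)

/-- `R` is a δ-expander in the functional sense: the inequality with maxima holds for all
nonzero nonnegative functions. -/
def IsExpanderFun {S : Type*} [Fintype S] {r : ℕ} (δ : ℝ) (R : Finset (Fin r → S)) : Prop :=
  ∀ f : Fin r → S → ℝ, (∀ i x, 0 ≤ f i x) → (∀ i, ∃ x, f i x ≠ 0) →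
    |relApply R f - (R.card : ℝ) * (∏ i, ∑ x, |f i x|) / (Fintype.card S : ℝ) ^ r|
      < δ * R.card * ∏ i, ⨆ x, f i x

noncomputable def relMean {S : Type*} [Fintype S] {r : ℕ} (R : Finset (Fin r → S))
    (f : Fin r → S → ℝ) : ℝ :=
  (R.card : ℝ) * (∏ i, ∑ x, |f i x|) / (Fintype.card S : ℝ) ^ r

noncomputable def relDiscrepancy {S : Type*} [Fintype S] {r : ℕ} (R : Finset (Fin r → S))
    (f : Fin r → S → ℝ) : ℝ :=
  relApply R f - relMean R f

section Discrepancy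

variable {S : Type*} [Fintype S] {r : ℕ} {R : Finset (Fin r → S)} {f : Fin r → S → ℝ}

theorem relDiscrepancy_eq_zero_of_forall_eq_zero {i : Fin r} (hi : ∀ x, f i x = 0) :
    relDiscrepancy R f = 0 := by
  have happly : relApply R f = 0 :=
    Finset.sum_eq_zero fun t _ => Finset.prod_eq_zero (Finset.mem_univ i) (hi (t i))
  have hprod : ∏ j, ∑ x, |f j x| = 0 :=
    Finset.prod_eq_zero (Finset.mem_univ i) (by simp [hi])
  simp [relDiscrepancy, relMean, happly, hprod]

theorem IsExpanderFun.abs_relDiscrepancy_le {δ : ℝ} (hR : IsExpanderFun δ R) (hδ : 0 ≤ δ)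
    (hf : ∀ i x, 0 ≤ f i x) :
    |relDiscrepancy R f| ≤ δ * R.card * ∏ i, ⨆ x, f i x := by
  by_cases hnz : ∀ i, ∃ x, f i x ≠ 0
  · exact (hR f hf hnz).le
  · obtain ⟨i, hi⟩ : ∃ i, ∀ x, f i x = 0 := by simpa using hnz
    rw [relDiscrepancy_eq_zero_of_forall_eq_zero hi, abs_zero]
    exact mul_nonneg (by positivity)
      (Finset.prod_nonneg fun j _ => Real.iSup_nonneg (hf j))

theorem IsExpanderFun.abs_relDiscrepancy_lt {δ : ℝ} (hR : IsExpanderFun δ R) (hδ : 0 < δ)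
    (hcard : 0 < R.card) (hf0 : ∀ i x, 0 ≤ f i x) (hf1 : ∀ i x, f i x ≤ 1) :
    |relDiscrepancy R f| < δ * R.card := by
  by_cases hnz : ∀ i, ∃ x, f i x ≠ 0
  · have hsup : ∏ i, ⨆ x, f i x ≤ 1 :=
      Finset.prod_le_one (fun i _ => Real.iSup_nonneg (hf0 i))
        (fun i _ => Real.iSup_le (hf1 i) zero_le_one)
    calc |relDiscrepancy R f| < δ * R.card * ∏ i, ⨆ x, f i x := hR f hf0 hnz
      _ ≤ δ * R.card := mul_le_of_le_one_right (by positivity) hsup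
  · obtain ⟨i, hi⟩ : ∃ i, ∀ x, f i x = 0 := by simpa using hnz
    rw [relDiscrepancy_eq_zero_of_forall_eq_zero hi, abs_zero]
    positivity

end Discrepancy

namespace SimpleGraph

variable {V : Type*} [Fintype V] (G : SimpleGraph V)

theorem mem_walkRel_succ_iff {n : ℕ} (t : Fin (n + 1) → V) :
    t ∈ walkRel G (n + 1) ↔ ∀ i : Fin n, G.Adj (t i.castSucc) (t i.succ) := by
  simp only [walkRel, Finset.mem_filter, Finset.mem_univ, true_and]
  constructor
  · intro h i
    exact h i.castSucc (by simp)
  · intro h i hi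
    exact h ⟨i, by omega⟩

theorem walkRel_one : walkRel G 1 = Finset.univ :=
  Finset.eq_univ_of_forall fun t => (mem_walkRel_succ_iff G t).2 finZeroElim

theorem cons_mem_walkRel_iff {n : ℕ} (a : V) (s : Fin (n + 1) → V) :
    Fin.cons a s ∈ walkRel G (n + 2) ↔ G.Adj a (s 0) ∧ s ∈ walkRel G (n + 1) := by
  simp only [mem_walkRel_succ_iff, Fin.forall_fin_succ (n := n), ← Fin.succ_castSucc,
    Fin.cons_succ, Fin.castSucc_zero, Fin.cons_zero]

theorem sum_walkRel_succ_succ {β : Type*} [AddCommMonoid β] (n : ℕ)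
    (F : (Fin (n + 2) → V) → β) :
    ∑ t ∈ walkRel G (n + 2), F t
      = ∑ s ∈ walkRel G (n + 1), ∑ a ∈ G.neighborFinset (s 0), F (Fin.cons a s) := by
  rw [Finset.sum_sigma']
  refine Finset.sum_nbij' (fun t => ⟨Fin.tail t, t 0⟩) (fun p => Fin.cons p.2 p.1)
    ?_ ?_ (fun t _ => Fin.cons_self_tail t) (fun p _ => by simp) (fun t _ => by
      rw [Fin.cons_self_tail])
  · intro t ht
    rw [← Fin.cons_self_tail t, cons_mem_walkRel_iff] at ht
    simpa [mem_neighborFinset, adj_comm] using ht.symm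
  · rintro ⟨s, a⟩ h
    simp only [Finset.mem_sigma, mem_neighborFinset] at h
    exact (cons_mem_walkRel_iff G a s).2 ⟨h.2.symm, h.1⟩

theorem card_walkRel {d : ℕ} (hreg : G.IsRegularOfDegree d) (n : ℕ) :
    (walkRel G (n + 1)).card = d ^ n * Fintype.card V := by
  induction n with
  | zero => simp [walkRel_one]
  | succ n ih =>
    rw [Finset.card_eq_sum_ones, sum_walkRel_succ_succ]
    simp only [Finset.sum_const, smul_eq_mul, mul_one, card_neighborFinset_eq_degree,
      hreg.degree_eq, ih]
    ring

noncomputable def neighborWeight (f₀ f₁ : V → ℝ) (v : V) : ℝ :=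
  f₁ v * ∑ a ∈ G.neighborFinset v, f₀ a

noncomputable def contractFirst {n : ℕ} (x : Fin (n + 2) → V → ℝ) :
    Fin (n + 1) → V → ℝ :=
  Fin.cons (G.neighborWeight (x 0) (x 1)) fun j => x j.succ.succ

theorem relApply_walkRel_one (f : Fin 1 → V → ℝ) :
    relApply (walkRel G 1) f = ∑ v, f 0 v := by
  rw [relApply, walkRel_one]
  exact Fintype.sum_equiv (Equiv.funUnique (Fin 1) V) _ _ fun t => Fin.prod_univ_one _

theorem relApply_walkRel_succ_succ {n : ℕ} (x : Fin (n + 2) → V → ℝ) :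
    relApply (walkRel G (n + 2)) x
      = relApply (walkRel G (n + 1)) (G.contractFirst x) := by
  rw [relApply, relApply, sum_walkRel_succ_succ]
  refine Finset.sum_congr rfl fun s _ => ?_
  simp only [contractFirst, Fin.prod_univ_succ, Fin.cons_zero, Fin.cons_succ, neighborWeight,
    Fin.succ_zero_eq_one]
  rw [← Finset.sum_mul]
  ring

theorem sum_neighborWeight (f₀ f₁ : V → ℝ) :
    ∑ v, G.neighborWeight f₀ f₁ v = relApply (walkRel G 2) ![f₀, f₁] := by
  rw [relApply_walkRel_succ_succ (n := 0), relApply_walkRel_one]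
  rfl

theorem neighborWeight_nonneg {f₀ f₁ : V → ℝ} (h₀ : ∀ v, 0 ≤ f₀ v) (h₁ : ∀ v, 0 ≤ f₁ v)
    (v : V) :
    0 ≤ G.neighborWeight f₀ f₁ v :=
  mul_nonneg (h₁ v) (Finset.sum_nonneg fun a _ => h₀ a)

theorem neighborWeight_le {d : ℕ} (hreg : G.IsRegularOfDegree d) {f₀ f₁ : V → ℝ}
    (h₀ : ∀ v, 0 ≤ f₀ v) (h₀' : ∀ v, f₀ v ≤ 1) (h₁' : ∀ v, f₁ v ≤ 1) (v : V) :
    G.neighborWeight f₀ f₁ v ≤ d := by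
  have hsum : ∑ a ∈ G.neighborFinset v, f₀ a ≤ d := by
    simpa [card_neighborFinset_eq_degree, hreg.degree_eq] using
      Finset.sum_le_card_nsmul (G.neighborFinset v) f₀ 1 fun a _ => h₀' a
  calc G.neighborWeight f₀ f₁ v ≤ 1 * ∑ a ∈ G.neighborFinset v, f₀ a :=
        mul_le_mul_of_nonneg_right (h₁' v) (Finset.sum_nonneg fun a _ => h₀ a)
    _ ≤ d := by rwa [one_mul]

variable {d n : ℕ} {x : Fin (n + 2) → V → ℝ}

theorem abs_relDiscrepancy_walkRel_contractFirst_le (hreg : G.IsRegularOfDegree d)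
    (hx₀ : ∀ i v, 0 ≤ x i v) (hx₁ : ∀ i v, x i v ≤ 1) {δ : ℝ} (hδ : 0 ≤ δ)
    (hprev : IsExpanderFun δ (walkRel G (n + 1))) :
    |relDiscrepancy (walkRel G (n + 1)) (G.contractFirst x)| ≤ δ * (walkRel G (n + 2)).card := by
  set y := G.contractFirst x
  have hy₀ : ∀ i v, 0 ≤ y i v :=
    Fin.forall_fin_succ.2 ⟨G.neighborWeight_nonneg (hx₀ 0) (hx₀ 1), fun j => hx₀ _⟩
  have hsup : ∏ i, ⨆ v, y i v ≤ d := by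
    rw [Fin.prod_univ_succ]
    calc (⨆ v, y 0 v) * ∏ j : Fin n, ⨆ v, y j.succ v ≤ d * 1 :=
          mul_le_mul (Real.iSup_le (G.neighborWeight_le hreg (hx₀ 0) (hx₁ 0) (hx₁ 1))
              (Nat.cast_nonneg d))
            (Finset.prod_le_one (fun j _ => Real.iSup_nonneg (hx₀ _))
              fun j _ => Real.iSup_le (hx₁ _) zero_le_one)
            (Finset.prod_nonneg fun j _ => Real.iSup_nonneg (hx₀ _)) (Nat.cast_nonneg d)
      _ = d := mul_one _
  calc |relDiscrepancy (walkRel G (n + 1)) y|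
      ≤ δ * (walkRel G (n + 1)).card * ∏ i, ⨆ v, y i v := hprev.abs_relDiscrepancy_le hδ hy₀
    _ ≤ δ * (walkRel G (n + 1)).card * d := by gcongr
    _ = δ * (walkRel G (n + 2)).card := by
      rw [card_walkRel G hreg, card_walkRel G hreg]
      push_cast
      ring

theorem abs_relMean_contractFirst_sub_relMean_lt [Nonempty V] (hreg : G.IsRegularOfDegree d)
    (hd : 0 < d) (hx₀ : ∀ i v, 0 ≤ x i v) (hx₁ : ∀ i v, x i v ≤ 1) {ε : ℝ} (hε : 0 < ε)
    (h2 : IsExpanderFun ε (walkRel G 2)) :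
    |relMean (walkRel G (n + 1)) (G.contractFirst x) - relMean (walkRel G (n + 2)) x|
      < ε * (walkRel G (n + 2)).card := by
  set N : ℝ := (Fintype.card V : ℝ)
  set P := ∏ j : Fin n, ∑ v, |x j.succ.succ v|
  have hPN : P ≤ N ^ n := by
    calc P ≤ ∏ _j : Fin n, N := Finset.prod_le_prod (fun j _ => by positivity) fun j _ => by
            simpa [abs_of_nonneg (hx₀ _ _)] using
              Finset.sum_le_card_nsmul Finset.univ _ 1 fun v _ => hx₁ j.succ.succ v
      _ = N ^ n := by simp
  set C : ℝ := d ^ n * (P / N ^ n)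
  have hC₀ : 0 ≤ C := by positivity
  have hC : C ≤ d ^ n :=
    mul_le_of_le_one_right (by positivity) (div_le_one_of_le₀ hPN (by positivity))
  have hcard₂ : (walkRel G 2).card = d ^ 1 * Fintype.card V := card_walkRel G hreg 1
  have hdisc : |relDiscrepancy (walkRel G 2) ![x 0, x 1]| < ε * (walkRel G 2).card :=
    h2.abs_relDiscrepancy_lt hε (by rw [hcard₂]; positivity)
      (Fin.forall_fin_two.2 ⟨hx₀ 0, hx₀ 1⟩) (Fin.forall_fin_two.2 ⟨hx₁ 0, hx₁ 1⟩)
  -- Both means carry the factor `P`, and `∑ v, |neighborWeight (x 0) (x 1) v| = R₂(x 0, x 1)`.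
  have hid : relMean (walkRel G (n + 1)) (G.contractFirst x) - relMean (walkRel G (n + 2)) x
      = C * relDiscrepancy (walkRel G 2) ![x 0, x 1] := by
    simp only [relMean, relDiscrepancy, contractFirst, ← sum_neighborWeight, card_walkRel G hreg,
      C, P, N, Fin.prod_univ_succ, Fin.prod_univ_zero, Fin.cons_zero, Fin.cons_succ,
      Matrix.cons_val_zero, Matrix.cons_val_succ, Fin.succ_zero_eq_one,
      abs_of_nonneg (G.neighborWeight_nonneg (hx₀ 0) (hx₀ 1) _)]
    push_cast
    field_simp
    ring
  rw [hid, abs_mul, abs_of_nonneg hC₀]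
  calc C * |relDiscrepancy (walkRel G 2) ![x 0, x 1]|
      ≤ d ^ n * |relDiscrepancy (walkRel G 2) ![x 0, x 1]| := by gcongr
    _ < d ^ n * (ε * (walkRel G 2).card) := by gcongr
    _ = ε * (walkRel G (n + 2)).card := by
      rw [hcard₂, card_walkRel G hreg]
      push_cast
      ring

theorem abs_relDiscrepancy_walkRel_lt [Nonempty V] (hreg : G.IsRegularOfDegree d) (hd : 0 < d)
    {δ ε : ℝ} (hδ : 0 ≤ δ) (hε : 0 < ε) (hprev : IsExpanderFun δ (walkRel G (n + 1)))
    (h2 : IsExpanderFun ε (walkRel G 2)) (hx₀ : ∀ i v, 0 ≤ x i v) (hx₁ : ∀ i v, x i v ≤ 1) :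
    |relDiscrepancy (walkRel G (n + 2)) x| < (δ + ε) * (walkRel G (n + 2)).card := by
  have hsplit : relDiscrepancy (walkRel G (n + 2)) x
      = relDiscrepancy (walkRel G (n + 1)) (G.contractFirst x)
        + (relMean (walkRel G (n + 1)) (G.contractFirst x)
          - relMean (walkRel G (n + 2)) x) := by
    rw [relDiscrepancy, relDiscrepancy, relApply_walkRel_succ_succ]
    ring
  rw [hsplit, add_mul]
  exact (abs_add_le _ _).trans_lt <| add_lt_add_of_le_of_lt
    (G.abs_relDiscrepancy_walkRel_contractFirst_le hreg hx₀ hx₁ hδ hprev)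
    (G.abs_relMean_contractFirst_sub_relMean_lt hreg hd hx₀ hx₁ hε h2)

end SimpleGraph

/-- Inductive step: if `R_{k-1}` is an `ε(k-2)`-expander and `R₂` is an `ε`-expander,
then for all `[0,1]`-valued functions `x₁,…,x_k`,
`|R_k(x₁,…,x_k) − |R_k|·∏|xᵢ|₁/|V|^k| < (k−1)·ε·|R_k|`. -/
theorem walkRel_inductive_step
    {V : Type*} [Fintype V] [Nonempty V]
    (G : SimpleGraph V) (d : ℕ) (hd : 0 < d) (hreg : G.IsRegularOfDegree d)
    (k : ℕ) (hk : 3 ≤ k) (ε : ℝ) (hε : 0 < ε)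
    (hprev : IsExpanderFun (ε * ((k : ℝ) - 2)) (walkRel G (k - 1)))
    (h2 : IsExpanderFun ε (walkRel G 2))
    (x : Fin k → V → ℝ) (hx0 : ∀ i v, 0 ≤ x i v) (hx1 : ∀ i v, x i v ≤ 1) :
    |relApply (walkRel G k) x -
        ((walkRel G k).card : ℝ) * (∏ i, ∑ v, |x i v|) / (Fintype.card V : ℝ) ^ k|
      < ((k : ℝ) - 1) * ε * (walkRel G k).card := by
  obtain ⟨n, rfl⟩ : ∃ n, k = n + 2 := ⟨k - 2, by omega⟩
  have hδ : 0 ≤ ε * (((n + 2 : ℕ) : ℝ) - 2) := by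
    push_cast
    rw [add_sub_cancel_right]
    positivity
  calc _ < (ε * (((n + 2 : ℕ) : ℝ) - 2) + ε) * (walkRel G (n + 2)).card :=
        G.abs_relDiscrepancy_walkRel_lt hreg hd hδ hε hprev h2 hx0 hx1
    _ = _ := by ring
end

section
/- Let d ≥ 1, let G be a simple undirected d-regular graph on n vertices with second eigenvalue bound |λ|, and let k ≥ 2. The k-th power relation R_k of walks of length k−1 satisfies: if (k−1)|λ|/d · t^k < 1 for a positive integer t, then any graph homomorphism-style coloring question is controlled: for any subsets S₁,…,S_k ⊆ V each of size at least n/t, there exists a walk (a₁,…,a_k) in G with aᵢ ∈ Sᵢ for all i. -/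
/-!
Let `f_j(u)` count the walks `a₀ ⋯ a_j` with `aᵢ ∈ Sᵢ` ending at `u`. Summing `f_{j+1}` is an
edge count between `S_{j+1}` and the weight `f_j ≤ d ^ j`, so the expander mixing bound, applied
to each level set of `f_j`, gives `|∑ f_j - d ^ j ∏ |Sᵢ| / n ^ j| ≤ j λ d ^ (j - 1) n`. If every
`|Sᵢ| ≥ n / t`, the main term is at least `d ^ j n / t ^ (j + 1)`, which beats the error as soon
as `j (λ / d) t ^ (j + 1) < 1`; hence `∑ f_j > 0` and some walk exists.
-/

open Finset

attribute [local instance] Classical.propDecidable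

/-- `E(A,B)`: number of ordered pairs `(a,b) ∈ A × B` with `a` adjacent to `b`. -/
noncomputable def edgeCount {V : Type*} (G : SimpleGraph V) (A B : Finset V) : ℕ :=
  ((A ×ˢ B).filter fun p => G.Adj p.1 p.2).card

theorem Finset.sum_nsmul_eq_sum_range_sum_filter_lt {ι M : Type*} [AddCommMonoid M]
    (s : Finset ι) (f : ι → ℕ) (g : ι → M) {N : ℕ} (hf : ∀ i ∈ s, f i ≤ N) :
    ∑ i ∈ s, f i • g i = ∑ m ∈ range N, ∑ i ∈ s with m < f i, g i := by
  simp_rw [sum_filter]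
  rw [sum_comm]
  refine sum_congr rfl fun i hi => ?_
  have hcard : (range N).filter (· < f i) = range (f i) := by
    ext m
    simp only [mem_filter, mem_range]
    exact ⟨And.right, fun h => ⟨h.trans_le (hf i hi), h⟩⟩
  rw [← sum_filter, sum_const, hcard, card_range]

theorem edgeCount_eq_sum_card_filter_adj {V : Type*} (G : SimpleGraph V) (A B : Finset V) :
    edgeCount G A B = ∑ v ∈ A, #(B.filter (G.Adj v)) := by
  rw [edgeCount, card_filter, sum_product]
  exact sum_congr rfl fun _ _ => (card_filter _ _).symm

section Walks

variable {V : Type*} [Fintype V] (G : SimpleGraph V)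

theorem abs_edgeCount_sub_le_of_mixing {d : ℕ} {lam : ℝ} (hlam : 0 ≤ lam)
    (hmix : ∀ A B : Finset V,
      |(edgeCount G A B : ℝ) - (d : ℝ) * A.card * B.card / (Fintype.card V : ℝ)| ≤
        lam * Real.sqrt ((A.card : ℝ) * B.card)) (A B : Finset V) :
    |(edgeCount G A B : ℝ) - d * #A * #B / Fintype.card V| ≤ lam * Fintype.card V := by
  refine (hmix A B).trans (mul_le_mul_of_nonneg_left ?_ hlam)
  have hA : (#A : ℝ) ≤ Fintype.card V := mod_cast card_le_univ A
  have hB : (#B : ℝ) ≤ Fintype.card V := mod_cast card_le_univ B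
  rw [Real.sqrt_le_left (by positivity), sq]
  exact mul_le_mul hA hB (by positivity) (by positivity)

/-- Write `f` as the sum of the `N` indicators of `{f > m}` and apply `hE` to each. -/
theorem abs_sum_mul_card_filter_adj_sub_le {d : ℕ} {ε : ℝ}
    (hE : ∀ A B : Finset V, |(edgeCount G A B : ℝ) - d * #A * #B / Fintype.card V| ≤ ε)
    (f : V → ℕ) {N : ℕ} (hf : ∀ v, f v ≤ N) (B : Finset V) :
    |∑ v, (f v : ℝ) * #(B.filter (G.Adj v)) - d * #B * (∑ v, (f v : ℝ)) / Fintype.card V|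
      ≤ N * ε := by
  set A : ℕ → Finset V := fun m => univ.filter (m < f ·)
  have hf' : ∀ v ∈ univ, f v ≤ N := fun v _ => hf v
  have hedges :
      ∑ v, (f v : ℝ) * #(B.filter (G.Adj v)) = ∑ m ∈ range N, (edgeCount G (A m) B : ℝ) := by
    simp_rw [← nsmul_eq_mul, sum_nsmul_eq_sum_range_sum_filter_lt _ _ _ hf',
      edgeCount_eq_sum_card_filter_adj, Nat.cast_sum]
    rfl
  have hweight : ∑ v, (f v : ℝ) = ∑ m ∈ range N, (#(A m) : ℝ) := by
    simpa using sum_nsmul_eq_sum_range_sum_filter_lt _ _ (fun _ => (1 : ℝ)) hf'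
  rw [hedges, hweight, mul_sum, sum_div, ← sum_sub_distrib]
  calc _ ≤ ∑ m ∈ range N, |(edgeCount G (A m) B : ℝ) - d * #B * #(A m) / Fintype.card V| :=
        abs_sum_le_sum_abs _ _
    _ ≤ ∑ m ∈ range N, ε := sum_le_sum fun m _ => by
        simpa only [mul_right_comm] using hE (A m) B
    _ = N * ε := by simp

/-- The number of walks `a₀ ⋯ a_j` in `G` with `aᵢ ∈ T i` for all `i` and `a_j = u`. -/
noncomputable def walkCount (T : ℕ → Finset V) : ℕ → V → ℕ
  | 0, u => if u ∈ T 0 then 1 else 0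
  | j + 1, u => if u ∈ T (j + 1) then ∑ v ∈ G.neighborFinset u, walkCount T j v else 0

variable {G}

theorem walkCount_le_pow {d : ℕ} (hreg : G.IsRegularOfDegree d) (T : ℕ → Finset V) :
    ∀ j u, walkCount G T j u ≤ d ^ j
  | 0, u => by unfold walkCount; split <;> simp
  | j + 1, u => by
    unfold walkCount
    split
    · calc ∑ v ∈ G.neighborFinset u, walkCount G T j v
          ≤ ∑ _v ∈ G.neighborFinset u, d ^ j :=
            sum_le_sum fun v _ => walkCount_le_pow hreg T j v
        _ = d ^ (j + 1) := by
          rw [sum_const, G.card_neighborFinset_eq_degree, hreg u, smul_eq_mul, pow_succ']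
    · exact Nat.zero_le _

theorem exists_walk_of_walkCount_pos (T : ℕ → Finset V) :
    ∀ {j u}, 0 < walkCount G T j u →
      ∃ a : ℕ → V, a j = u ∧ (∀ i < j, G.Adj (a i) (a (i + 1))) ∧ ∀ i ≤ j, a i ∈ T i
  | 0, u, h => by
    unfold walkCount at h
    split at h
    case isTrue hu => exact ⟨fun _ => u, rfl, by simp, fun i hi => by rwa [Nat.le_zero.1 hi]⟩
    case isFalse => exact absurd h (lt_irrefl 0)
  | j + 1, u, h => by
    unfold walkCount at h
    split at h
    case isFalse => exact absurd h (lt_irrefl 0)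
    case isTrue hu =>
      obtain ⟨v, hvu, hv⟩ := sum_pos_iff.1 h
      obtain ⟨a, rfl, hadj, hmem⟩ := exists_walk_of_walkCount_pos T hv
      refine ⟨Function.update a (j + 1) u, by simp, fun i hi => ?_, fun i hi => ?_⟩
      · rcases Nat.lt_succ_iff_lt_or_eq.1 hi with hi | rfl
        · simpa [Function.update_of_ne (by omega : i ≠ j + 1), Function.update_of_ne
            (by omega : i + 1 ≠ j + 1)] using hadj i hi
        · simpa [Function.update_of_ne (by omega : i ≠ i + 1)]
            using ((G.mem_neighborFinset _ _).1 hvu).symm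
      · rcases Nat.le_succ_iff.1 hi with hi | rfl
        · simpa [Function.update_of_ne (by omega : i ≠ j + 1)] using hmem i hi
        · simpa using hu

theorem sum_walkCount_zero (T : ℕ → Finset V) : ∑ u, walkCount G T 0 u = #(T 0) := by
  simp [walkCount]

theorem sum_walkCount_succ (T : ℕ → Finset V) (j : ℕ) :
    ∑ u, walkCount G T (j + 1) u
      = ∑ v, walkCount G T j v * #((T (j + 1)).filter (G.Adj v)) := by
  simp only [walkCount]
  rw [← sum_filter, filter_mem_eq_inter, univ_inter,
    sum_comm' (t' := univ) (s' := fun v => (T (j + 1)).filter (G.Adj v))]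
  · simp [mul_comm]
  · intro u v
    simp [SimpleGraph.adj_comm]

/-- Each step of a walk is one application of the weighted mixing bound, with weights bounded
by `d ^ j`; the factor `d * #(T (j + 1)) / n ≤ d` then carries the earlier error forward. -/
theorem abs_sum_walkCount_sub_le {d : ℕ} (hd : 0 < d) (hreg : G.IsRegularOfDegree d) {ε : ℝ}
    (hE : ∀ A B : Finset V, |(edgeCount G A B : ℝ) - d * #A * #B / Fintype.card V| ≤ ε)
    (T : ℕ → Finset V) :
    ∀ j, |∑ u, (walkCount G T j u : ℝ) - d ^ j * (∏ i ∈ range (j + 1), (#(T i) : ℝ)) /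
      (Fintype.card V) ^ j| ≤ j * d ^ j * ε / d
  | 0 => by simp [← Nat.cast_sum, sum_walkCount_zero]
  | j + 1 => by
    set n : ℝ := (Fintype.card V : ℝ)
    set W := ∑ u, (walkCount G T j u : ℝ)
    set P := d ^ j * (∏ i ∈ range (j + 1), (#(T i) : ℝ)) / n ^ j
    set c : ℝ := d * #(T (j + 1)) / n
    have hd' : (0 : ℝ) < d := mod_cast hd
    have hc : 0 ≤ c := by positivity
    have hcd : c ≤ d := div_le_of_le_mul₀ (by positivity) hd'.le
      (mul_le_mul_of_nonneg_left (by simp only [n]; exact_mod_cast card_le_univ _) hd'.le)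
    have hstep : |∑ u, (walkCount G T (j + 1) u : ℝ) - c * W| ≤ d ^ j * ε := by
      have := abs_sum_mul_card_filter_adj_sub_le G hE (walkCount G T j)
        (walkCount_le_pow hreg T j) (T (j + 1))
      rw [← Nat.cast_sum, sum_walkCount_succ]
      push_cast at this ⊢
      convert this using 3
      ring
    have hprev : c * |W - P| ≤ j * d ^ (j + 1) * ε / d := by
      calc c * |W - P| ≤ d * (j * d ^ j * ε / d) :=
            mul_le_mul hcd (abs_sum_walkCount_sub_le hd hreg hE T j) (abs_nonneg _) hd'.le
        _ = j * d ^ (j + 1) * ε / d := by field_simp; ring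
    have hsplit :
        d ^ (j + 1) * (∏ i ∈ range (j + 1 + 1), (#(T i) : ℝ)) / n ^ (j + 1) = c * P := by
      rw [prod_range_succ]
      ring
    rw [hsplit]
    calc _ ≤ |∑ u, (walkCount G T (j + 1) u : ℝ) - c * W| + |c * W - c * P| := abs_sub_le _ _ _
      _ ≤ d ^ j * ε + j * d ^ (j + 1) * ε / d := by
        rw [← mul_sub, abs_mul, abs_of_nonneg hc]; exact add_le_add hstep hprev
      _ = _ := by field_simp; push_cast; ring

theorem exists_walk_of_card_ge [Nonempty V] {d : ℕ} (hd : 0 < d) (hreg : G.IsRegularOfDegree d)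
    {lam : ℝ} (hlam : 0 ≤ lam)
    (hmix : ∀ A B : Finset V,
      |(edgeCount G A B : ℝ) - (d : ℝ) * A.card * B.card / (Fintype.card V : ℝ)| ≤
        lam * Real.sqrt ((A.card : ℝ) * B.card))
    {j t : ℕ} (ht : 0 < t) (hsmall : j * (lam / d) * (t : ℝ) ^ (j + 1) < 1) (T : ℕ → Finset V)
    (hT : ∀ i ≤ j, (Fintype.card V : ℝ) / t ≤ #(T i)) :
    ∃ a : ℕ → V, (∀ i < j, G.Adj (a i) (a (i + 1))) ∧ ∀ i ≤ j, a i ∈ T i := by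
  set n : ℝ := (Fintype.card V : ℝ)
  have hn : 0 < n := Nat.cast_pos.2 Fintype.card_pos
  have hprod : (n / t) ^ (j + 1) ≤ ∏ i ∈ range (j + 1), (#(T i) : ℝ) := by
    simpa only [prod_const, card_range] using prod_le_prod (s := range (j + 1))
      (fun _ _ => by positivity) (fun i hi => hT i (Nat.lt_succ_iff.1 (mem_range.1 hi)))
  have herror : j * d ^ j * (lam * n) / d < d ^ j * (n / t) ^ (j + 1) / n ^ j := by
    have hsplit : j * d ^ j * (lam * n) / d
        = d ^ j * (n / t) ^ (j + 1) / n ^ j * (j * (lam / d) * (t : ℝ) ^ (j + 1)) := by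
      rw [div_pow]
      field_simp
      ring
    rw [hsplit]
    exact mul_lt_of_lt_one_right (by positivity) hsmall
  have hpos : 0 < ∑ u, (walkCount G T j u : ℝ) := by
    have hlower := (abs_le.1 (abs_sum_walkCount_sub_le hd hreg
      (abs_edgeCount_sub_le_of_mixing G hlam hmix) T j)).1
    have hmain := div_le_div_of_nonneg_right
      (mul_le_mul_of_nonneg_left hprod (by positivity : (0 : ℝ) ≤ d ^ j))
      (by positivity : 0 ≤ n ^ j)
    linarith
  obtain ⟨u, -, hu⟩ := sum_pos_iff.1 (by exact_mod_cast hpos : 0 < ∑ u, walkCount G T j u)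
  obtain ⟨a, -, hadj, hmem⟩ := exists_walk_of_walkCount_pos T hu
  exact ⟨a, hadj, hmem⟩

end Walks

theorem exists_walk_through_large_sets_general
    {V : Type*} [Fintype V] [Nonempty V]
    (G : SimpleGraph V) (d : ℕ) (hd : 0 < d) (hreg : G.IsRegularOfDegree d)
    (lam : ℝ) (hlam : 0 < lam)
    (hmix : ∀ A B : Finset V,
      |(edgeCount G A B : ℝ) - (d : ℝ) * A.card * B.card / (Fintype.card V : ℝ)| ≤
        lam * Real.sqrt ((A.card : ℝ) * B.card))
    (k t : ℕ) (ht : 0 < t)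
    (hsmall : ((k : ℝ) - 1) * (lam / d) * (t : ℝ) ^ k < 1)
    (S : Fin k → Finset V)
    (hS : ∀ i, (Fintype.card V : ℝ) / (t : ℝ) ≤ ((S i).card : ℝ)) :
    ∃ a : Fin k → V,
      (∀ i : Fin k, ∀ h : (i : ℕ) + 1 < k, G.Adj (a i) (a ⟨(i : ℕ) + 1, h⟩)) ∧
      ∀ i, a i ∈ S i := by
  obtain _ | j := k
  · exact ⟨isEmptyElim, fun i => i.elim0, fun i => i.elim0⟩
  obtain ⟨a, hadj, hmem⟩ :=
    exists_walk_of_card_ge hd hreg hlam.le hmix ht (by simpa using hsmall)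
    (fun i => if h : i < j + 1 then S ⟨i, h⟩ else univ)
    (fun i hi => by simpa [Nat.lt_succ_of_le hi] using hS ⟨i, Nat.lt_succ_of_le hi⟩)
  refine ⟨fun i => a i, fun i hi => hadj i (by omega), fun i => ?_⟩
  simpa [Nat.lt_succ_iff.1 i.isLt] using hmem i (by omega)

/-- If `(k−1)·(|λ|/d)·t^k < 1` for a `d`-regular graph satisfying the Expander Mixing
Lemma with eigenvalue bound `λ`, then for any subsets `S₁,…,S_k` of the vertices, each of
size at least `n/t`, there is a walk `(a₁,…,a_k)` in `G` with `aᵢ ∈ Sᵢ` for all `i`. -/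
theorem exists_walk_through_large_sets
    {V : Type*} [Fintype V] [Nonempty V]
    (G : SimpleGraph V) (d : ℕ) (hd : 0 < d) (hreg : G.IsRegularOfDegree d)
    (lam : ℝ) (hlam : 0 < lam)
    (hmix : ∀ A B : Finset V,
      |(edgeCount G A B : ℝ) - (d : ℝ) * A.card * B.card / (Fintype.card V : ℝ)| ≤
        lam * Real.sqrt ((A.card : ℝ) * B.card))
    (k t : ℕ) (hk : 2 ≤ k) (ht : 0 < t)
    (hsmall : ((k : ℝ) - 1) * (lam / d) * (t : ℝ) ^ k < 1)
    (S : Fin k → Finset V)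
    (hS : ∀ i, (Fintype.card V : ℝ) / (t : ℝ) ≤ ((S i).card : ℝ)) :
    ∃ a : Fin k → V,
      (∀ i : Fin k, ∀ h : (i : ℕ) + 1 < k, G.Adj (a i) (a ⟨(i : ℕ) + 1, h⟩)) ∧
      ∀ i, a i ∈ S i :=
  exists_walk_through_large_sets_general G d hd hreg lam hlam hmix k t ht hsmall S hS
end
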